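/- arXiv:2104.12394 — 4 statements merged into one kernel-verified Lean document; each statement's English description precedes it below -/
import Mathlib

section
/- Under the band hypotheses, the matrix T_N is invertible for all sufficiently large N. -/
/-!
Since `a (-j) = conj (a j)`, the symbol `φ θ = ∑ a n e^{inθ}` is real-valued, and it never vanishes
because `K (e^{iθ}) = e^{i n₀ θ} φ θ`. Being continuous, it therefore has a constant sign; replacing
`a` by `-a` if necessary, `φ ≥ c > 0` on `[0, 2π]`. For `x : ℂ^{N+1}` put `p θ = ∑ x l e^{-ilθ}`.
Orthogonality of the exponentials gives `2π x* T_N x = ∫ φ |p|²` and `2π x* x = ∫ |p|²`, hence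
`Re (x* T_N x) ≥ c x* x`, so `T_N x = 0` forces `x = 0`: `T_N` is invertible for every `N`.
-/

open Finset Filter Matrix
open scoped ComplexConjugate

/-- The (N+1)×(N+1) band Toeplitz matrix with entries `a (l−k)` for `|k−l| ≤ n₀`,
and `0` otherwise. -/
def bandToeplitz (a : ℤ → ℂ) (n₀ N : ℕ) : Matrix (Fin (N + 1)) (Fin (N + 1)) ℂ :=
  fun k l => if |(l : ℤ) - (k : ℤ)| ≤ (n₀ : ℤ) then a ((l : ℤ) - (k : ℤ)) else 0

/-- `K(z) = Σ_{n=−n₀}^{n₀} a_n z^{n+n₀}`. -/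
noncomputable def bandK (a : ℤ → ℂ) (n₀ : ℕ) (z : ℂ) : ℂ :=
  ∑ n ∈ Finset.Icc (-(n₀ : ℤ)) (n₀ : ℤ), a n * z ^ (n + n₀).toNat

open Complex
open scoped Real ComplexOrder

theorem Continuous.forall_pos_or_forall_neg {X : Type*} [TopologicalSpace X] [PreconnectedSpace X]
    {f : X → ℝ} (hf : Continuous f) (hf0 : ∀ x, f x ≠ 0) : (∀ x, 0 < f x) ∨ ∀ x, f x < 0 := by
  by_contra! ⟨⟨x, hx⟩, y, hy⟩
  obtain ⟨z, hz⟩ := intermediate_value_univ x y hf ⟨hx, hy⟩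
  exact hf0 z hz

theorem integral_exp_int_mul_mul_I (m : ℤ) :
    ∫ θ in (0 : ℝ)..2 * π, exp (m * θ * I) = if m = 0 then ((2 * π : ℝ) : ℂ) else 0 := by
  split_ifs with hm
  · simp [hm]
  have hmI : (m : ℂ) * I ≠ 0 := mul_ne_zero (by exact_mod_cast hm) I_ne_zero
  simp_rw [mul_right_comm _ _ I]
  rw [integral_exp_mul_complex hmI, ofReal_zero, mul_zero, Complex.exp_zero,
    show (m : ℂ) * I * ((2 * π : ℝ) : ℂ) = m * (2 * π * I) by push_cast; ring,
    exp_int_mul_two_pi_mul_I, sub_self, zero_div]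

theorem integral_sum_mul_exp_int_mul_mul_I {ι : Type*} (S : Finset ι) (c : ι → ℂ) (m : ι → ℤ) :
    ∫ θ in (0 : ℝ)..2 * π, ∑ i ∈ S, c i * exp (m i * θ * I) =
      (2 * π : ℝ) * ∑ i ∈ S with m i = 0, c i := by
  rw [intervalIntegral.integral_finsetSum fun i _ => by
    exact (continuous_const.mul (by fun_prop)).intervalIntegrable _ _, Finset.sum_filter,
    Finset.mul_sum]
  refine Finset.sum_congr rfl fun i _ => ?_
  rw [intervalIntegral.integral_const_mul, integral_exp_int_mul_mul_I]
  split_ifs <;> ring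

noncomputable def bandSymbol (a : ℤ → ℂ) (n₀ : ℕ) (θ : ℝ) : ℂ :=
  ∑ n ∈ Icc (-(n₀ : ℤ)) n₀, a n * exp (n * θ * I)

theorem continuous_bandSymbol (a : ℤ → ℂ) (n₀ : ℕ) : Continuous (bandSymbol a n₀) :=
  continuous_finsetSum _ fun _ _ => by fun_prop

theorem bandK_exp_mul_I (a : ℤ → ℂ) (n₀ : ℕ) (θ : ℝ) :
    bandK a n₀ (exp (θ * I)) = exp (n₀ * θ * I) * bandSymbol a n₀ θ := by
  rw [bandK, bandSymbol, Finset.mul_sum]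
  refine Finset.sum_congr rfl fun n hn => ?_
  have hn₀ : ((n + n₀).toNat : ℂ) = n + n₀ := by
    exact_mod_cast Int.toNat_of_nonneg (by linarith [(Finset.mem_Icc.mp hn).1])
  rw [← Complex.exp_nat_mul, hn₀, mul_left_comm _ (a n), ← Complex.exp_add]
  ring_nf

theorem conj_bandSymbol {a : ℤ → ℂ} (ha : ∀ j, a (-j) = conj (a j)) (n₀ : ℕ) (θ : ℝ) :
    conj (bandSymbol a n₀ θ) = bandSymbol a n₀ θ := by
  simp only [bandSymbol, map_sum, map_mul, ← exp_conj, map_intCast, conj_ofReal, conj_I]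
  refine Finset.sum_nbij' (- ·) (- ·) ?_ ?_ (fun _ _ => neg_neg _) (fun _ _ => neg_neg _) ?_
  all_goals simp only [Finset.mem_Icc]
  · intro n hn; omega
  · intro n hn; omega
  · intro n _; rw [← ha, Int.cast_neg]; ring_nf

-- The sign of the exponent makes `∫ φ |p|²` produce `bandToeplitz` rather than its transpose.
noncomputable def trigPoly {n : ℕ} (x : Fin n → ℂ) (θ : ℝ) : ℂ :=
  ∑ l, x l * exp (-(l : ℤ) * θ * I)

theorem bandToeplitz_apply_eq_sum_filter (a : ℤ → ℂ) (n₀ N : ℕ) (k l : Fin (N + 1)) :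
    bandToeplitz a n₀ N k l = ∑ n ∈ Icc (-(n₀ : ℤ)) n₀ with n + (k : ℤ) - (l : ℤ) = 0, a n := by
  have hfilter : ∀ n : ℤ, n + (k : ℤ) - (l : ℤ) = 0 ↔ n = (l : ℤ) - (k : ℤ) := fun n => by omega
  simp only [hfilter, Finset.filter_eq', Finset.mem_Icc, ← abs_le, bandToeplitz]
  split_ifs <;> simp

theorem normSq_trigPoly {n : ℕ} (x : Fin n → ℂ) (θ : ℝ) :
    (normSq (trigPoly x θ) : ℂ) =
      ∑ kl : Fin n × Fin n,
        conj (x kl.1) * x kl.2 * exp ((((kl.1 : ℤ) - kl.2 : ℤ) : ℂ) * θ * I) := by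
  rw [normSq_eq_conj_mul_self, trigPoly, map_sum, Finset.sum_mul_sum, ← Finset.univ_product_univ,
    Finset.sum_product]
  refine Finset.sum_congr rfl fun k _ => Finset.sum_congr rfl fun l _ => ?_
  rw [map_mul, ← exp_conj, mul_mul_mul_comm, ← Complex.exp_add]
  simp only [map_mul, map_neg, map_intCast, conj_ofReal, conj_I]
  push_cast
  ring_nf

theorem integral_bandSymbol_mul_normSq_trigPoly (a : ℤ → ℂ) (n₀ N : ℕ) (x : Fin (N + 1) → ℂ) :
    ∫ θ in (0 : ℝ)..2 * π, bandSymbol a n₀ θ * normSq (trigPoly x θ) =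
      (2 * π : ℝ) * (star x ⬝ᵥ bandToeplitz a n₀ N *ᵥ x) := by
  have hexpand : ∀ θ : ℝ, bandSymbol a n₀ θ * normSq (trigPoly x θ) =
      ∑ i ∈ Icc (-(n₀ : ℤ)) n₀ ×ˢ (univ : Finset (Fin (N + 1) × Fin (N + 1))),
        a i.1 * (conj (x i.2.1) * x i.2.2) * exp (((i.1 + i.2.1 - i.2.2 : ℤ) : ℂ) * θ * I) := by
    intro θ
    rw [normSq_trigPoly, bandSymbol, Finset.sum_mul_sum, Finset.sum_product]
    refine Finset.sum_congr rfl fun n _ => Finset.sum_congr rfl fun kl _ => ?_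
    rw [mul_mul_mul_comm, ← Complex.exp_add]
    push_cast
    ring_nf
  rw [intervalIntegral.integral_congr fun θ _ => hexpand θ, integral_sum_mul_exp_int_mul_mul_I]
  simp only [Finset.sum_filter, Finset.sum_product, ← Finset.univ_product_univ, dotProduct, mulVec,
    bandToeplitz_apply_eq_sum_filter, Finset.mul_sum, Finset.sum_mul]
  rw [Finset.sum_comm]
  refine Finset.sum_congr rfl fun k _ => ?_
  rw [Finset.sum_comm]
  refine Finset.sum_congr rfl fun l _ => Finset.sum_congr rfl fun n _ => ?_
  split_ifs
  · rw [Pi.star_apply, RCLike.star_def]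
    ring
  · simp

theorem integral_normSq_trigPoly {n : ℕ} (x : Fin n → ℂ) :
    ∫ θ in (0 : ℝ)..2 * π, (normSq (trigPoly x θ) : ℂ) = (2 * π : ℝ) * (star x ⬝ᵥ x) := by
  have hdiag : ∀ kl : Fin n × Fin n, ((kl.1 : ℤ) - kl.2 = 0 ↔ kl.1 = kl.2) := fun kl => by
    rw [sub_eq_zero, Nat.cast_inj, Fin.val_inj]
  simp_rw [normSq_trigPoly, integral_sum_mul_exp_int_mul_mul_I, hdiag, ← Finset.univ_product_univ,
    Finset.sum_filter, Finset.sum_product, Finset.sum_ite_eq, Finset.mem_univ, if_true, dotProduct,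
    Pi.star_apply, RCLike.star_def]

theorem mul_re_dotProduct_le_re_dotProduct_bandToeplitz_mulVec {a : ℤ → ℂ} {n₀ : ℕ} {c : ℝ}
    (hc : ∀ θ ∈ Set.Icc 0 (2 * π), c ≤ (bandSymbol a n₀ θ).re) {N : ℕ} (x : Fin (N + 1) → ℂ) :
    c * (star x ⬝ᵥ x).re ≤ (star x ⬝ᵥ bandToeplitz a n₀ N *ᵥ x).re := by
  have hp : Continuous fun θ => normSq (trigPoly x θ) :=
    continuous_normSq.comp (continuous_finsetSum _ fun _ _ => by fun_prop)
  have hre : ∀ {f : ℝ → ℂ} {z : ℂ}, ∫ θ in (0 : ℝ)..2 * π, f θ = (2 * π : ℝ) * z →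
      Continuous f → ∫ θ in (0 : ℝ)..2 * π, (f θ).re = 2 * π * z.re := fun hfz hf => by
    simpa [re_ofReal_mul] using
      (intervalIntegral.intervalIntegral_re (hf.intervalIntegrable 0 (2 * π))).trans
        (congrArg re hfz)
  have hT := hre (integral_bandSymbol_mul_normSq_trigPoly a n₀ N x)
    ((continuous_bandSymbol a n₀).mul (continuous_ofReal.comp hp))
  have hI := hre (integral_normSq_trigPoly x) (continuous_ofReal.comp hp)
  simp only [re_mul_ofReal, ofReal_re] at hT hI
  have hmono : ∫ θ in (0 : ℝ)..2 * π, c * normSq (trigPoly x θ) ≤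
      ∫ θ in (0 : ℝ)..2 * π, (bandSymbol a n₀ θ).re * normSq (trigPoly x θ) :=
    intervalIntegral.integral_mono_on Real.two_pi_pos.le
      ((continuous_const.mul hp).intervalIntegrable _ _)
      (((continuous_re.comp (continuous_bandSymbol a n₀)).mul hp).intervalIntegrable _ _)
      fun θ hθ => mul_le_mul_of_nonneg_right (hc θ hθ) (normSq_nonneg _)
  rw [intervalIntegral.integral_const_mul, hI, hT] at hmono
  nlinarith [Real.pi_pos]

theorem isUnit_bandToeplitz_of_forall_re_bandSymbol_pos {a : ℤ → ℂ} {n₀ : ℕ}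
    (hpos : ∀ θ, 0 < (bandSymbol a n₀ θ).re) (N : ℕ) : IsUnit (bandToeplitz a n₀ N) := by
  obtain ⟨θ₀, -, hmin⟩ := isCompact_Icc.exists_isMinOn (Set.nonempty_Icc.2 Real.two_pi_pos.le)
    (continuous_re.comp (continuous_bandSymbol a n₀)).continuousOn
  rw [isUnit_iff_isUnit_det, isUnit_iff_ne_zero, ne_eq, ← exists_mulVec_eq_zero_iff]
  rintro ⟨x, hx0, hx⟩
  have hle := mul_re_dotProduct_le_re_dotProduct_bandToeplitz_mulVec (fun θ hθ => hmin hθ) x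
  rw [hx, dotProduct_zero, zero_re] at hle
  exact (mul_pos (hpos θ₀) (Complex.pos_iff.1 (dotProduct_star_self_pos_iff.2 hx0)).1).not_ge hle

theorem bandToeplitz_neg (a : ℤ → ℂ) (n₀ N : ℕ) :
    bandToeplitz (-a) n₀ N = -bandToeplitz a n₀ N := by
  ext k l
  simp only [bandToeplitz, Pi.neg_apply, Matrix.neg_apply]
  split_ifs <;> simp

theorem bandSymbol_neg (a : ℤ → ℂ) (n₀ : ℕ) (θ : ℝ) :
    bandSymbol (-a) n₀ θ = -bandSymbol a n₀ θ := by
  simp [bandSymbol]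

theorem stmt5_general (n₀ : ℕ) (a : ℤ → ℂ)
    (ha : ∀ j : ℤ, a (-j) = conj (a j))
    (hK1 : ∀ z : ℂ, ‖z‖ = 1 → bandK a n₀ z ≠ 0) :
    ∀ᶠ N in atTop, IsUnit (bandToeplitz a n₀ N) := by
  have hreal : ∀ θ, ((bandSymbol a n₀ θ).re : ℂ) = bandSymbol a n₀ θ := fun θ =>
    conj_eq_iff_re.1 (conj_bandSymbol ha n₀ θ)
  have hre_ne : ∀ θ, (bandSymbol a n₀ θ).re ≠ 0 := fun θ h0 =>
    hK1 _ (norm_exp_ofReal_mul_I θ) (by rw [bandK_exp_mul_I, ← hreal, h0, ofReal_zero, mul_zero])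
  refine Eventually.of_forall fun N => ?_
  rcases (continuous_re.comp (continuous_bandSymbol a n₀)).forall_pos_or_forall_neg hre_ne with
    hpos | hneg
  · exact isUnit_bandToeplitz_of_forall_re_bandSymbol_pos hpos N
  · have hpos : ∀ θ, 0 < (bandSymbol (-a) n₀ θ).re := fun θ => by
      simpa [bandSymbol_neg] using hneg θ
    simpa [bandToeplitz_neg] using (isUnit_bandToeplitz_of_forall_re_bandSymbol_pos hpos N).neg

/-- Under the band hypotheses (the symbol polynomial `K` has no root of modulus one,
and has exactly `n₀` roots, with multiplicity, of modulus strictly less than one and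
`n₀` roots of modulus strictly greater than one), the band Toeplitz matrix `T_N` is
invertible for all sufficiently large `N`. -/
theorem stmt5 (n₀ : ℕ) (hn₀ : 1 ≤ n₀) (a : ℤ → ℂ)
    (ha : ∀ j : ℤ, a (-j) = conj (a j))
    (hK1 : ∀ z : ℂ, ‖z‖ = 1 → bandK a n₀ z ≠ 0)
    (σ τ : ℕ) (α : Fin σ → ℂ) (s : Fin σ → ℕ) (β : Fin τ → ℂ) (t : Fin τ → ℕ) (C : ℂ)
    (hC : C ≠ 0)
    (hα : ∀ i, ‖α i‖ < 1) (hαinj : Function.Injective α)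
    (hs : ∀ i, 0 < s i) (hssum : ∑ i, s i = n₀)
    (hβ : ∀ j, 1 < ‖β j‖) (hβinj : Function.Injective β)
    (ht : ∀ j, 0 < t j) (htsum : ∑ j, t j = n₀)
    (hfact : ∀ z : ℂ,
      bandK a n₀ z = C * (∏ i, (z - α i) ^ s i) * ∏ j, (z - β j) ^ t j) :
    ∀ᶠ N in atTop, IsUnit (bandToeplitz a n₀ N) :=
  stmt5_general n₀ a ha hK1
end

section
/- For every integer m ≥ 1 there exist polynomials ψ_{1,m},…,ψ_{m,m} with deg ψ_{k,m} ≤ m−k, independent of α and r, such that for every complex α with 0 < |α| < 1 and every integer r ≥ 0, the following identity holds in L²(𝕋): π₋( χ^r (1 − α·conj(χ))^{−m} ) = α^{r+1} · conj(χ) · Σ_{k=1}^{m} ψ_{k,m}(r) · (1 − α·conj(χ))^{−k}. -/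
/-!
Since `|α| < 1`, `(1 - α χ̄)^{-m} = ∑ₙ C(n+m-1, m-1) αⁿ χ̄ⁿ` converges absolutely and uniformly
on `𝕋`, so Fourier coefficients can be read off termwise. The left side has coefficient
`C(r+j+m, m-1) α^{r+1+j}` at frequency `-(j+1)`. With `ψ_{k,m}(x) = C(x+m-k, m-k)` the right side
only has negative frequencies, and at `-(j+1)` its coefficient is
`α^{r+1+j} ∑ₖ C(r+m-k, m-k) C(j+k-1, k-1)`. The two agree by the upper Vandermonde identity,
which is the coefficient form of `(1-X)^{-(a+1)} (1-X)^{-(b+1)} = (1-X)^{-(a+b+2)}`.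
-/

open MeasureTheory Real Complex Filter Finset Matrix
open scoped ENNReal Topology ComplexConjugate

noncomputable section

instance : Fact (0 < 2 * π) := ⟨by positivity⟩

/-- The Hilbert space L²(𝕋) for 𝕋 = ℝ/2πℤ with normalized Haar measure. -/
abbrev Ltwo := Lp ℂ 2 (AddCircle.haarAddCircle : Measure (AddCircle (2 * π)))

/-- The orthogonal projection `π₊` of L²(𝕋) onto the Hardy space
`H⁺(𝕋) = {ψ : ψ̂(u) = 0 for u < 0}`, expressed through the Fourier basis. -/
def piPlus (ψ : Ltwo) : Ltwo :=
  ∑' u : ℤ, if 0 ≤ u then fourierBasis.repr ψ u • (fourierBasis u : Ltwo) else 0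

/-- The orthogonal projection `π₋` of L²(𝕋) onto
`(H⁺(𝕋))^⊥ = {ψ : ψ̂(u) = 0 for u ≥ 0}`, expressed through the Fourier basis. -/
def piMinus (ψ : Ltwo) : Ltwo :=
  ∑' u : ℤ, if u < 0 then fourierBasis.repr ψ u • (fourierBasis u : Ltwo) else 0

/-- Pointwise multiplication of `ψ ∈ L²(𝕋)` by a function `Φ` (defined to be `0` in the
degenerate case where the product is not square integrable). -/
def mulLp (Φ : AddCircle (2 * π) → ℂ) (ψ : Ltwo) : Ltwo := by
  classical exact
    if h : MemLp (fun θ => Φ θ * (ψ : AddCircle (2 * π) → ℂ) θ) 2 AddCircle.haarAddCircle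
    then h.toLp _ else 0

/-- The element of L²(𝕋) represented by a square-integrable function `f` (defined to be
`0` in the degenerate case where `f` is not square integrable). -/
def toLp2 (f : AddCircle (2 * π) → ℂ) : Ltwo := by
  classical exact if h : MemLp f 2 AddCircle.haarAddCircle then h.toLp f else 0

/-- The Hardy space `H⁺(𝕋)` as a subset of L²(𝕋). -/
def Hplus : Set Ltwo :=
  {ψ | ∀ u : ℤ, u < 0 → fourierCoeff (ψ : AddCircle (2 * π) → ℂ) u = 0}

/-- The Hankel operator `H_Φ : ψ ↦ π₋(Φψ)`. -/
def hankel (Φ : AddCircle (2 * π) → ℂ) (ψ : Ltwo) : Ltwo := piMinus (mulLp Φ ψ)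

/-- The Hankel operator `H_Φ̃ : ψ ↦ π₊(Φ̃ψ)`. -/
def hankelTilde (Φ : AddCircle (2 * π) → ℂ) (ψ : Ltwo) : Ltwo := piPlus (mulLp Φ ψ)

lemma Nat.sum_antidiagonal_add_choose_mul_add_choose (a b n : ℕ) :
    ∑ p ∈ antidiagonal n, (a + p.1).choose p.1 * (b + p.2).choose p.2
      = (a + b + 1 + n).choose n := by
  have h := congrArg (PowerSeries.coeff n)
    (pow_add (PowerSeries.mk 1 : PowerSeries ℤ) (a + 1) (b + 1))
  rw [show a + 1 + (b + 1) = a + b + 1 + 1 by ring] at h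
  simp only [PowerSeries.mk_one_pow_eq_mk_choose_add, PowerSeries.coeff_mul,
    PowerSeries.coeff_mk] at h
  norm_cast at h
  rw [← Nat.choose_symm_add, h]
  refine sum_congr rfl fun p _ => ?_
  rw [Nat.choose_symm_add, Nat.choose_symm_add]

lemma Nat.sum_Icc_add_choose_mul_add_choose {m : ℕ} (hm : 1 ≤ m) (r j : ℕ) :
    ∑ k ∈ Icc 1 m, (r + (m - k)).choose (m - k) * (j + (k - 1)).choose (k - 1)
      = (r + j + m).choose (m - 1) := by
  obtain ⟨n, rfl⟩ := Nat.exists_eq_add_of_le' hm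
  rw [← Finset.Ico_add_one_right_eq_Icc, Finset.sum_Ico_eq_sum_range, add_tsub_cancel_right,
    add_tsub_cancel_right]
  simp only [add_comm 1, Nat.add_sub_add_right, add_tsub_cancel_right, mul_comm ((r + _).choose _)]
  rw [← Finset.Nat.sum_antidiagonal_eq_sum_range_succ
      (fun i k => (j + i).choose i * (r + k).choose k),
    Nat.sum_antidiagonal_add_choose_mul_add_choose]
  congr 1; ring

open Polynomial in
def addChoosePoly (d : ℕ) : ℝ[X] := (d.factorial : ℝ)⁻¹ • (ascPochhammer ℝ d).comp (X + 1)

open Polynomial in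
lemma natDegree_addChoosePoly_le (d : ℕ) : (addChoosePoly d).natDegree ≤ d := by
  refine (natDegree_smul_le _ _).trans ?_
  rw [natDegree_comp, ascPochhammer_natDegree, ← C_1, natDegree_X_add_C, mul_one]

open Polynomial in
lemma addChoosePoly_eval_natCast (d r : ℕ) :
    (addChoosePoly d).eval (r : ℝ) = ((r + d).choose d : ℝ) := by
  have h : (ascPochhammer ℝ d).eval ((r + 1 : ℕ) : ℝ) = d.factorial * (r + d).choose d := by
    rw [← ascPochhammer_eval_cast, ascPochhammer_nat_eq_ascFactorial,
      Nat.ascFactorial_eq_factorial_mul_choose, Nat.cast_mul]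
  rw [addChoosePoly, eval_smul, eval_comp, eval_add, eval_X, eval_one, smul_eq_mul,
    ← Nat.cast_succ, h, inv_mul_cancel_left₀ (by positivity)]

lemma toLp2_continuousMap (F : C(AddCircle (2 * π), ℂ)) :
    toLp2 F = ContinuousMap.toLp 2 AddCircle.haarAddCircle ℂ F := by
  have hF := ContinuousMap.coeFn_toLp (p := 2) (𝕜 := ℂ) AddCircle.haarAddCircle F
  have hmem : MemLp F 2 AddCircle.haarAddCircle := (Lp.memLp _).ae_eq hF
  rw [toLp2, dif_pos hmem]
  exact Lp.ext (hmem.coeFn_toLp.trans hF.symm)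

lemma hasSum_fourierBasis_repr_toLp2 {c : ℕ → ℂ} {d : ℕ → ℤ} (hc : Summable fun n => ‖c n‖)
    {f : AddCircle (2 * π) → ℂ} (hf : ∀ θ, HasSum (fun n => c n * fourier (d n) θ) (f θ))
    (u : ℤ) : HasSum (fun n => if d n = u then c n else 0) (fourierBasis.repr (toLp2 f) u) := by
  obtain ⟨F, hF⟩ : Summable fun n => c n • fourier (T := 2 * π) (d n) :=
    .of_norm (by simpa only [norm_smul, fourier_norm, mul_one] using hc)
  obtain rfl : f = F := funext fun θ => (hf θ).unique (hF.map (ContinuousMap.evalCLM ℂ θ)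
    (ContinuousMap.evalCLM ℂ θ).continuous)
  rw [toLp2_continuousMap]
  have hbasis (k : ℤ) : fourierBasis.repr (fourierLp 2 k : Ltwo) u = if k = u then 1 else 0 := by
    rw [← congrFun coe_fourierBasis k, HilbertBasis.repr_self, lp.single_apply, Pi.single_apply]
    exact if_congr eq_comm rfl rfl
  have h := (hF.mapL (ContinuousMap.toLp 2 AddCircle.haarAddCircle ℂ)).mapL
    ((lp.evalCLM ℂ (fun _ : ℤ => ℂ) 2 u).comp
      fourierBasis.repr.toLinearIsometry.toContinuousLinearMap)
  simp only [ContinuousLinearMap.comp_apply, map_smul] at h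
  refine h.congr_fun fun n => ?_
  change _ = c n * fourierBasis.repr (fourierLp 2 (d n) : Ltwo) u
  rw [hbasis, mul_ite, mul_one, mul_zero]

lemma fourierBasis_repr_toLp2_apply {c : ℕ → ℂ} {d : ℕ → ℤ} (hd : Function.Injective d)
    (hc : Summable fun n => ‖c n‖) {f : AddCircle (2 * π) → ℂ}
    (hf : ∀ θ, HasSum (fun n => c n * fourier (d n) θ) (f θ)) (n : ℕ) :
    fourierBasis.repr (toLp2 f) (d n) = c n := by
  refine (hasSum_fourierBasis_repr_toLp2 hc hf (d n)).unique ?_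
  simpa using hasSum_single (f := fun k => if d k = d n then c k else 0) n
    fun k hk => if_neg (hd.ne hk)

lemma fourierBasis_repr_toLp2_eq_zero {c : ℕ → ℂ} {d : ℕ → ℤ}
    (hc : Summable fun n => ‖c n‖) {f : AddCircle (2 * π) → ℂ}
    (hf : ∀ θ, HasSum (fun n => c n * fourier (d n) θ) (f θ)) {u : ℤ} (hu : ∀ n, d n ≠ u) :
    fourierBasis.repr (toLp2 f) u = 0 :=
  (hasSum_fourierBasis_repr_toLp2 hc hf u).unique (by simpa only [hu, if_false] using hasSum_zero)

lemma fourierBasis_repr_piMinus (ψ : Ltwo) (u : ℤ) :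
    fourierBasis.repr (piMinus ψ) u = if u < 0 then fourierBasis.repr ψ u else 0 := by
  have hmem : Memℓp (fun v : ℤ => if v < 0 then fourierBasis.repr ψ v else 0) 2 :=
    (lp.memℓp (fourierBasis.repr ψ)).mono' fun v => by split_ifs <;> simp
  have hpi : piMinus ψ = fourierBasis.repr.symm ⟨_, hmem⟩ := by
    rw [piMinus, ← (fourierBasis.hasSum_repr_symm ⟨_, hmem⟩).tsum_eq]
    congr 1 with v
    split_ifs <;> simp [*]
  rw [hpi, LinearIsometryEquiv.apply_symm_apply]

lemma fourier_natCast_apply (n : ℕ) (θ : AddCircle (2 * π)) :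
    fourier (n : ℤ) θ = fourier 1 θ ^ n := by
  rw [fourier_apply, fourier_one, natCast_zsmul, AddCircle.toCircle_nsmul, Circle.coe_pow]

lemma fourier_sub_natCast_apply (s : ℤ) (n : ℕ) (θ : AddCircle (2 * π)) :
    fourier (s - n) θ = fourier s θ * conj (fourier 1 θ) ^ n := by
  rw [sub_eq_add_neg, fourier_add, fourier_neg, fourier_natCast_apply, map_pow]

section InvOneSubPow

variable {α : ℂ}

lemma summable_norm_choose_mul_pow (hα : ‖α‖ < 1) (k : ℕ) :
    Summable fun n : ℕ => ‖((n + k).choose k * α ^ n : ℂ)‖ := by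
  simpa only [norm_mul, norm_pow, Complex.norm_natCast] using
    summable_choose_mul_geometric_of_norm_lt_one k (r := ‖α‖) (by rwa [norm_norm])

lemma hasSum_fourier_mul_inv_one_sub_pow (hα : ‖α‖ < 1) (s : ℤ) (k : ℕ) (θ : AddCircle (2 * π)) :
    HasSum (fun n : ℕ => ((n + k).choose k * α ^ n : ℂ) * fourier (s - n) θ)
      (fourier s θ * (1 - α * conj (fourier 1 θ))⁻¹ ^ (k + 1)) := by
  have hw : ‖α * conj (fourier 1 θ)‖ < 1 := by
    rwa [norm_mul, RCLike.norm_conj, show ‖fourier 1 θ‖ = 1 from Circle.norm_coe _, mul_one]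
  have h := (hasSum_choose_mul_geometric_of_norm_lt_one k hw).mul_left (fourier s θ)
  rw [one_div, ← inv_pow] at h
  refine h.congr_fun fun n => ?_
  rw [fourier_sub_natCast_apply, mul_pow]
  ring

lemma summable_norm_sum_mul_choose_mul_pow (hα : ‖α‖ < 1) (s : Finset ℕ) (b : ℕ → ℂ)
    (e : ℕ → ℕ) :
    Summable fun n : ℕ => ‖∑ k ∈ s, b k * ((n + e k).choose (e k) * α ^ n)‖ :=
  (summable_sum fun k _ => (summable_norm_choose_mul_pow hα (e k)).mul_left ‖b k‖).of_nonneg_of_le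
    (fun _ => norm_nonneg _) fun _ =>
      (norm_sum_le _ _).trans (sum_le_sum fun _ _ => norm_mul_le _ _)

lemma fourierBasis_repr_pow_mul_inv_one_sub_pow (hα : ‖α‖ < 1) {m : ℕ} (hm : 1 ≤ m) (r n : ℕ) :
    fourierBasis.repr (toLp2 fun θ => fourier 1 θ ^ r * ((1 - α * conj (fourier 1 θ))⁻¹) ^ m)
        ((r : ℤ) - n) =
      (n + (m - 1)).choose (m - 1) * α ^ n := by
  refine fourierBasis_repr_toLp2_apply (d := fun n : ℕ => (r : ℤ) - n)
    (fun _ _ h => by simpa using h) (summable_norm_choose_mul_pow hα (m - 1)) (fun θ => ?_) n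
  simpa only [fourier_natCast_apply, Nat.sub_add_cancel hm] using
    hasSum_fourier_mul_inv_one_sub_pow hα r (m - 1) θ

lemma hasSum_mul_conj_fourier_mul_sum_inv_one_sub_pow (hα : ‖α‖ < 1) (β : ℂ) (a : ℕ → ℂ) (m : ℕ)
    (θ : AddCircle (2 * π)) :
    HasSum (fun n : ℕ => (∑ k ∈ Icc 1 m, β * a k * ((n + (k - 1)).choose (k - 1) * α ^ n)) *
        fourier (-1 - n) θ)
      (β * conj (fourier 1 θ) * ∑ k ∈ Icc 1 m, a k * ((1 - α * conj (fourier 1 θ))⁻¹) ^ k) := by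
  have h := hasSum_sum fun k (_ : k ∈ Icc 1 m) =>
    (hasSum_fourier_mul_inv_one_sub_pow hα (-1) (k - 1) θ).mul_left (β * a k)
  have hval : ∑ k ∈ Icc 1 m, β * a k *
        (fourier (-1) θ * (1 - α * conj (fourier 1 θ))⁻¹ ^ (k - 1 + 1)) =
      β * conj (fourier 1 θ) * ∑ k ∈ Icc 1 m, a k * ((1 - α * conj (fourier 1 θ))⁻¹) ^ k := by
    rw [fourier_neg, mul_sum]
    refine sum_congr rfl fun k hk => ?_
    rw [Nat.sub_add_cancel (mem_Icc.1 hk).1]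
    ring
  rw [hval] at h
  refine h.congr_fun fun n => ?_
  rw [sum_mul]
  refine sum_congr rfl fun k _ => ?_
  ring

lemma fourierBasis_repr_mul_conj_fourier_mul_sum_inv_one_sub_pow (hα : ‖α‖ < 1) (β : ℂ) (a : ℕ → ℂ)
    (m j : ℕ) :
    fourierBasis.repr (toLp2 fun θ => β * conj (fourier 1 θ) *
        ∑ k ∈ Icc 1 m, a k * ((1 - α * conj (fourier 1 θ))⁻¹) ^ k) (-1 - j) =
      ∑ k ∈ Icc 1 m, β * a k * ((j + (k - 1)).choose (k - 1) * α ^ j) :=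
  fourierBasis_repr_toLp2_apply (d := fun n : ℕ => -1 - (n : ℤ)) (fun _ _ h => by simpa using h)
    (summable_norm_sum_mul_choose_mul_pow hα _ _ _)
    (hasSum_mul_conj_fourier_mul_sum_inv_one_sub_pow hα β a m) j

lemma fourierBasis_repr_mul_conj_fourier_mul_sum_inv_one_sub_pow_of_nonneg (hα : ‖α‖ < 1) (β : ℂ)
    (a : ℕ → ℂ) (m : ℕ) {u : ℤ} (hu : 0 ≤ u) :
    fourierBasis.repr (toLp2 fun θ => β * conj (fourier 1 θ) *
        ∑ k ∈ Icc 1 m, a k * ((1 - α * conj (fourier 1 θ))⁻¹) ^ k) u = 0 :=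
  fourierBasis_repr_toLp2_eq_zero (summable_norm_sum_mul_choose_mul_pow hα _ _ _)
    (hasSum_mul_conj_fourier_mul_sum_inv_one_sub_pow hα β a m) fun n => by omega

end InvOneSubPow

/-- For every integer m ≥ 1 there exist polynomials ψ_{1,m},…,ψ_{m,m} with
deg ψ_{k,m} ≤ m−k, independent of α and r, such that for every complex α with
0 < |α| < 1 and every integer r ≥ 0, the following identity holds in L²(𝕋):
π₋( χ^r (1 − α·conj(χ))^{−m} ) =
  α^{r+1} · conj(χ) · Σ_{k=1}^{m} ψ_{k,m}(r) · (1 − α·conj(χ))^{−k}. -/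
theorem stmt13 (m : ℕ) (hm : 1 ≤ m) :
    ∃ ψp : ℕ → Polynomial ℝ,
      (∀ k, 1 ≤ k → k ≤ m → (ψp k).natDegree ≤ m - k) ∧
      ∀ α : ℂ, 0 < ‖α‖ → ‖α‖ < 1 → ∀ r : ℕ,
        piMinus (toLp2 (fun θ =>
            (fourier 1 θ) ^ r * ((1 - α * conj (fourier 1 θ))⁻¹) ^ m)) =
          toLp2 (fun θ =>
            α ^ (r + 1) * conj (fourier 1 θ) *
              ∑ k ∈ Finset.Icc 1 m,
                (((ψp k).eval (r : ℝ) : ℝ) : ℂ) * ((1 - α * conj (fourier 1 θ))⁻¹) ^ k) := by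
  refine ⟨fun k => addChoosePoly (m - k), fun k _ _ => natDegree_addChoosePoly_le _, ?_⟩
  intro α _ hα r
  apply fourierBasis.repr.injective
  ext u
  rw [fourierBasis_repr_piMinus]
  split_ifs with hu
  · obtain ⟨j, rfl⟩ : ∃ j : ℕ, u = -1 - j := ⟨(-1 - u).toNat, by omega⟩
    have hfreq : (-1 - j : ℤ) = r - (r + 1 + j : ℕ) := by push_cast; ring
    have hcomb := congrArg (Nat.cast : ℕ → ℂ) (Nat.sum_Icc_add_choose_mul_add_choose hm r j)
    push_cast at hcomb
    rw [fourierBasis_repr_mul_conj_fourier_mul_sum_inv_one_sub_pow hα, hfreq,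
      fourierBasis_repr_pow_mul_inv_one_sub_pow hα hm,
      show r + 1 + j + (m - 1) = r + j + m by omega, ← hcomb, pow_add, sum_mul]
    refine sum_congr rfl fun k _ => ?_
    rw [addChoosePoly_eval_natCast, Complex.ofReal_natCast]
    ring
  · exact (fourierBasis_repr_mul_conj_fourier_mul_sum_inv_one_sub_pow_of_nonneg hα _ _ _
      (not_lt.1 hu)).symm
end
end

section
/- Let λ′ ∈ [0,2] and set χ_{λ′} = (1 − λ′) + i√(1 − (λ′ − 1)²). Then |χ_{λ′}| = 1, and for every real θ: (1 − cos θ) − λ′ = (1/2) · χ_{λ′} · (1 − conj(χ_{λ′}) e^{iθ}) · (1 − conj(χ_{λ′}) e^{−iθ}). -/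
open Complex Real
open scoped ComplexConjugate

theorem Complex.norm_ofReal_add_sqrt_one_sub_sq_mul_I {x : ℝ} (hx : x ^ 2 ≤ 1) :
    ‖(x : ℂ) + (√(1 - x ^ 2) : ℝ) * I‖ = 1 := by
  rw [norm_add_mul_I, sq_sqrt (by linarith), add_sub_cancel, Real.sqrt_one]

theorem Complex.half_mul_one_sub_conj_mul_exp_mul_one_sub_conj_mul_exp_neg {ω : ℂ}
    (hω : ‖ω‖ = 1) (θ : ℝ) :
    (1 / 2) * ω * (1 - conj ω * exp (θ * I)) * (1 - conj ω * exp (-θ * I)) =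
      ((ω.re - Real.cos θ : ℝ) : ℂ) := by
  have hunit : ω * conj ω = 1 := by
    rw [mul_conj, normSq_eq_norm_sq, hω]; norm_num
  have hexp : exp (θ * I) * exp (-θ * I) = 1 := by
    rw [← exp_add, neg_mul, add_neg_cancel, exp_zero]
  have hcos := two_cos (θ : ℂ)
  have hre := add_conj ω
  push_cast at hre ⊢
  linear_combination
    (conj ω * exp (θ * I) * exp (-θ * I) - exp (θ * I) - exp (-θ * I)) / 2 * hunit +
      conj ω / 2 * hexp + 1 / 2 * hre + 1 / 2 * hcos

/-- Let λ′ ∈ [0,2] and set χ_{λ′} = (1 − λ′) + i√(1 − (λ′ − 1)²). Then |χ_{λ′}| = 1, and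
for every real θ:
(1 − cos θ) − λ′ = (1/2) · χ_{λ′} · (1 − conj(χ_{λ′}) e^{iθ}) · (1 − conj(χ_{λ′}) e^{−iθ}). -/
theorem stmt14 (lam : ℝ) (hlam : lam ∈ Set.Icc (0 : ℝ) 2)
    (ω : ℂ) (hω : ω = ((1 - lam : ℝ) : ℂ) + (Real.sqrt (1 - (lam - 1) ^ 2) : ℝ) * Complex.I) :
    ‖ω‖ = 1 ∧
    ∀ θ : ℝ,
      (((1 - Real.cos θ) - lam : ℝ) : ℂ) =
        (1 / 2) * ω * (1 - conj ω * Complex.exp (θ * Complex.I))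
          * (1 - conj ω * Complex.exp (-θ * Complex.I)) := by
  obtain ⟨h0, h2⟩ := hlam
  have hnorm : ‖ω‖ = 1 := by
    rw [hω, show (lam - 1) ^ 2 = (1 - lam) ^ 2 by ring]
    exact norm_ofReal_add_sqrt_one_sub_sq_mul_I (by nlinarith)
  refine ⟨hnorm, fun θ => ?_⟩
  rw [half_mul_one_sub_conj_mul_exp_mul_one_sub_conj_mul_exp_neg hnorm, hω]
  simp only [add_re, ofReal_re, mul_re, ofReal_im, I_re, I_im, mul_zero, mul_one, sub_zero]
  ring_nf
end

section
/- Let α, β ∈ ℂ with |α| < 1 and |β| < 1, and let t, h ≥ 1 be integers. Then there exists a constant C > 0 such that for all integers k, l with 0 ≤ k ≤ l: |Σ_{u=0}^{k} τ_t(u) · τ_h(l−k+u) · α^u · β^{l−k+u}| ≤ C (1+l)^{h−1} |β|^{l−k}. In particular, for any ρ with max(|α|,|β|) ≤ ρ < 1 and any a ∈ (0,1), this sum is o(ρ^{a(l−k)}) as l−k → ∞. -/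
/-!
Write `d = l - k` and `r = ‖α‖‖β‖`. Since `d + u + i ≤ (1 + d)(u + i)` for `i ≥ 1`, we have
`τ_h(d + u) ≤ (1 + d)^(h-1) τ_h(u)`, and `τ_t(u) τ_h(u)` is at most the rising factorial
`(u + 1)(u + 2)⋯(u + p)` with `p = (t - 1) + (h - 1)`. Hence the sum is bounded by
`(1 + d)^(h-1) ‖β‖^d ∑_u (u + 1)⋯(u + p) r^u = (1 + d)^(h-1) ‖β‖^d p! / (1 - r)^(p+1)`.
For the second claim, `‖β‖^d / ρ^(a d) ≤ (ρ^(1-a))^d`, and a polynomial in `d` times a geometric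
sequence tends to zero.
-/

open Finset Filter Topology

/-- For an integer `m ≥ 1`, `τ_m(u) = (u+1)(u+2)⋯(u+m−1)`, with `τ_1(u) = 1`. -/
def tau (m u : ℕ) : ℕ := ∏ i ∈ Finset.Ico 1 m, (u + i)

open Nat in
theorem hasSum_ascFactorial_mul_geometric {𝕜 : Type*} [NormedField 𝕜] [HasSummableGeomSeries 𝕜]
    (p : ℕ) {r : 𝕜} (hr : ‖r‖ < 1) :
    HasSum (fun n : ℕ ↦ ((n + 1).ascFactorial p : 𝕜) * r ^ n) (p ! / (1 - r) ^ (p + 1)) := by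
  have h := (hasSum_choose_mul_geometric_of_norm_lt_one p hr).mul_left (p ! : 𝕜)
  rw [mul_one_div] at h
  refine h.congr_fun fun n ↦ ?_
  rw [ascFactorial_eq_factorial_mul_choose]
  push_cast
  ring

theorem tendsto_one_add_pow_mul_pow (p : ℕ) {s : ℝ} (hs₀ : 0 ≤ s) (hs₁ : s < 1) :
    Tendsto (fun n : ℕ ↦ (1 + n : ℝ) ^ p * s ^ n) atTop (𝓝 0) := by
  refine squeeze_zero' (.of_forall fun n ↦ by positivity) ?_
    (by simpa using (tendsto_pow_const_mul_const_pow_of_lt_one p hs₀ hs₁).const_mul (2 ^ p))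
  filter_upwards [eventually_ge_atTop 1] with n hn
  have : (1 + n : ℝ) ≤ 2 * n := by
    have : (1 : ℝ) ≤ n := by exact_mod_cast hn
    linarith
  calc (1 + n : ℝ) ^ p * s ^ n ≤ (2 * n) ^ p * s ^ n := by gcongr
    _ = 2 ^ p * (n ^ p * s ^ n) := by ring

theorem pow_div_rpow_mul_le {ρ : ℝ} (hρ : 0 ≤ ρ) (a : ℝ) {d : ℕ} (hd : d ≠ 0) :
    ρ ^ d / ρ ^ (a * d) ≤ (ρ ^ (1 - a)) ^ d := by
  have hsplit : ρ ^ d = (ρ ^ (1 - a)) ^ d * ρ ^ (a * d) := by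
    rw [← Real.rpow_mul_natCast hρ, ← Real.rpow_add' hρ (by ring_nf; exact_mod_cast hd),
      ← Real.rpow_natCast]
    ring_nf
  rw [hsplit]
  exact div_le_of_le_mul₀ (by positivity) (by positivity) le_rfl

theorem tau_eq_ascFactorial (m u : ℕ) : tau m u = (u + 1).ascFactorial (m - 1) := by
  rw [tau, Nat.ascFactorial_eq_prod_range, Finset.prod_Ico_eq_prod_range]
  exact prod_congr rfl fun i _ ↦ by ring

theorem tau_mul_tau_le (m n u : ℕ) :
    tau m u * tau n u ≤ (u + 1).ascFactorial (m - 1 + (n - 1)) := by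
  rw [tau_eq_ascFactorial, tau_eq_ascFactorial, ← Nat.ascFactorial_mul_ascFactorial]
  exact Nat.mul_le_mul_left _ (Nat.ascFactorial_le _ (by omega))

theorem tau_add_le (m d u : ℕ) : tau m (d + u) ≤ (1 + d) ^ (m - 1) * tau m u := by
  rw [tau, tau, ← Nat.card_Ico 1 m, ← prod_const, ← prod_mul_distrib]
  refine prod_le_prod' fun i hi ↦ ?_
  have : 1 ≤ i := (mem_Ico.mp hi).1
  nlinarith

theorem tau_mul_tau_add_le (t h d u : ℕ) :
    tau t u * tau h (d + u) ≤ (1 + d) ^ (h - 1) * (u + 1).ascFactorial (t - 1 + (h - 1)) :=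
  calc tau t u * tau h (d + u) ≤ tau t u * ((1 + d) ^ (h - 1) * tau h u) := by
        gcongr; exact tau_add_le h d u
    _ = (1 + d) ^ (h - 1) * (tau t u * tau h u) := by ring
    _ ≤ _ := by gcongr; exact tau_mul_tau_le t h u

open Nat in
theorem norm_sum_tau_mul_tau_le {α β : ℂ} (hαβ : ‖α‖ * ‖β‖ < 1) (t h k d : ℕ) :
    ‖∑ u ∈ range (k + 1), (tau t u : ℂ) * (tau h (d + u) : ℂ) * α ^ u * β ^ (d + u)‖ ≤
      (t - 1 + (h - 1))! / (1 - ‖α‖ * ‖β‖) ^ (t - 1 + (h - 1) + 1) *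
        (1 + d : ℝ) ^ (h - 1) * ‖β‖ ^ d := by
  set p := t - 1 + (h - 1)
  set r := ‖α‖ * ‖β‖
  have hsum := hasSum_ascFactorial_mul_geometric p (r := r)
    (by rwa [Real.norm_of_nonneg (by positivity)])
  have hterm : ∀ u, ‖(tau t u : ℂ) * (tau h (d + u) : ℂ) * α ^ u * β ^ (d + u)‖ ≤
      (1 + d : ℝ) ^ (h - 1) * ‖β‖ ^ d * ((u + 1).ascFactorial p * r ^ u) := fun u ↦
    calc _ = (tau t u * tau h (d + u) : ℝ) * (‖β‖ ^ d * r ^ u) := by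
          simp only [norm_mul, norm_pow, Complex.norm_natCast, r, mul_pow, pow_add]; ring
      _ ≤ (1 + d) ^ (h - 1) * (u + 1).ascFactorial p * (‖β‖ ^ d * r ^ u) :=
          mul_le_mul_of_nonneg_right (by exact_mod_cast tau_mul_tau_add_le t h d u) (by positivity)
      _ = _ := by ring
  calc _ ≤ ∑ u ∈ range (k + 1),
        (1 + d : ℝ) ^ (h - 1) * ‖β‖ ^ d * ((u + 1).ascFactorial p * r ^ u) :=
        (norm_sum_le _ _).trans (sum_le_sum fun u _ ↦ hterm u)
    _ = (1 + d : ℝ) ^ (h - 1) * ‖β‖ ^ d * ∑ u ∈ range (k + 1), (u + 1).ascFactorial p * r ^ u :=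
        (mul_sum _ _ _).symm
    _ ≤ (1 + d : ℝ) ^ (h - 1) * ‖β‖ ^ d * (p ! / (1 - r) ^ (p + 1)) := by
        gcongr
        exact sum_le_hasSum _ (fun u _ ↦ by positivity) hsum
    _ = _ := by ring

theorem tendsto_div_rpow_of_le_one_add_pow_mul_pow {f : ℕ → ℝ} {d : ℕ → ℕ}
    (hd : Tendsto d atTop atTop) {C ρ a : ℝ} (p : ℕ) (hC : 0 ≤ C) (hρ₀ : 0 ≤ ρ) (hρ₁ : ρ < 1)
    (ha : a < 1)
    (hf₀ : ∀ n, 0 ≤ f n) (hf : ∀ n, f n ≤ C * (1 + d n : ℝ) ^ p * ρ ^ d n) :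
    Tendsto (fun n ↦ f n / ρ ^ (a * d n)) atTop (𝓝 0) := by
  have hs₀ : 0 ≤ ρ ^ (1 - a) := Real.rpow_nonneg hρ₀ _
  have hs₁ : ρ ^ (1 - a) < 1 := Real.rpow_lt_one hρ₀ hρ₁ (by linarith)
  have hlim : Tendsto (fun n ↦ C * ((1 + d n : ℝ) ^ p * (ρ ^ (1 - a)) ^ d n)) atTop (𝓝 0) := by
    simpa only [mul_zero, Function.comp_def] using
      ((tendsto_one_add_pow_mul_pow p hs₀ hs₁).const_mul C).comp hd
  refine squeeze_zero' (.of_forall fun n ↦ div_nonneg (hf₀ n) (by positivity)) ?_ hlim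
  filter_upwards [hd.eventually_ge_atTop 1] with n hn
  calc f n / ρ ^ (a * d n) ≤ C * (1 + d n : ℝ) ^ p * (ρ ^ d n / ρ ^ (a * d n)) := by
        rw [← mul_div_assoc]
        gcongr
        exact hf n
    _ ≤ C * (1 + d n : ℝ) ^ p * (ρ ^ (1 - a)) ^ d n := by
        gcongr
        exact pow_div_rpow_mul_le hρ₀ a (by omega)
    _ = _ := mul_assoc _ _ _

theorem stmt17_general (α β : ℂ) (hα : norm α < 1) (hβ : norm β < 1)
    (t h : ℕ) :
    (∃ C : ℝ, 0 < C ∧ ∀ k l : ℕ, k ≤ l →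
      norm (∑ u ∈ Finset.range (k + 1),
          (tau t u : ℂ) * (tau h (l - k + u) : ℂ) * α ^ u * β ^ (l - k + u)) ≤
        C * ((1 : ℝ) + l) ^ (h - 1) * (norm β) ^ (l - k)) ∧
    ∀ ρ : ℝ, max (norm α) (norm β) ≤ ρ → ρ < 1 →
      ∀ a : ℝ, 0 < a → a < 1 →
        ∀ k l : ℕ → ℕ, (∀ n, k n ≤ l n) →
          Tendsto (fun n => l n - k n) atTop atTop →
          Tendsto (fun n =>
              norm (∑ u ∈ Finset.range (k n + 1),
                  (tau t u : ℂ) * (tau h (l n - k n + u) : ℂ) * α ^ u * β ^ (l n - k n + u)) /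
                ρ ^ (a * ((l n : ℝ) - (k n : ℝ)))) atTop (𝓝 0) := by
  have hαβ : ‖α‖ * ‖β‖ < 1 := by nlinarith [norm_nonneg α, norm_nonneg β]
  set C : ℝ := (t - 1 + (h - 1)).factorial / (1 - ‖α‖ * ‖β‖) ^ (t - 1 + (h - 1) + 1)
  have hC : 0 < C := div_pos (by positivity) (pow_pos (by linarith) _)
  have hbound := norm_sum_tau_mul_tau_le hαβ t h
  refine ⟨⟨C, hC, fun k l hkl ↦ (hbound k (l - k)).trans ?_⟩, ?_⟩
  · gcongr
    exact_mod_cast Nat.sub_le l k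
  intro ρ hρ hρ₁ a _ ha₁ k l hkl hkl_top
  have hβρ : ‖β‖ ≤ ρ := (le_max_right _ _).trans hρ
  simp only [← Nat.cast_sub (hkl _)]
  exact tendsto_div_rpow_of_le_one_add_pow_mul_pow hkl_top (h - 1) hC.le
    ((norm_nonneg β).trans hβρ) hρ₁ ha₁ (fun _ ↦ norm_nonneg _)
    fun _ ↦ (hbound _ _).trans (by gcongr)

/-- Let α, β ∈ ℂ with |α| < 1 and |β| < 1, and let t, h ≥ 1 be integers. Then there exists
a constant C > 0 such that for all integers k, l with 0 ≤ k ≤ l: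
|Σ_{u=0}^{k} τ_t(u) · τ_h(l−k+u) · α^u · β^{l−k+u}| ≤ C (1+l)^{h−1} |β|^{l−k}.
In particular, for any ρ with max(|α|,|β|) ≤ ρ < 1 and any a ∈ (0,1), this sum is
o(ρ^{a(l−k)}) as l−k → ∞. -/
theorem stmt17 (α β : ℂ) (hα : norm α < 1) (hβ : norm β < 1)
    (t h : ℕ) (ht : 1 ≤ t) (hh : 1 ≤ h) :
    (∃ C : ℝ, 0 < C ∧ ∀ k l : ℕ, k ≤ l →
      norm (∑ u ∈ Finset.range (k + 1),
          (tau t u : ℂ) * (tau h (l - k + u) : ℂ) * α ^ u * β ^ (l - k + u)) ≤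
        C * ((1 : ℝ) + l) ^ (h - 1) * (norm β) ^ (l - k)) ∧
    ∀ ρ : ℝ, max (norm α) (norm β) ≤ ρ → ρ < 1 →
      ∀ a : ℝ, 0 < a → a < 1 →
        ∀ k l : ℕ → ℕ, (∀ n, k n ≤ l n) →
          Tendsto (fun n => l n - k n) atTop atTop →
          Tendsto (fun n =>
              norm (∑ u ∈ Finset.range (k n + 1),
                  (tau t u : ℂ) * (tau h (l n - k n + u) : ℂ) * α ^ u * β ^ (l n - k n + u)) /
                ρ ^ (a * ((l n : ℝ) - (k n : ℝ)))) atTop (𝓝 0) :=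
  stmt17_general α β hα hβ t h
end
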